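/- arXiv:math/0506602 — 6 statements merged into one kernel-verified Lean document; each statement's English description precedes it below -/
import Mathlib

section
/- Let P be a monic integer polynomial and Q_n(t) = t^n P(t) ± R(t) for a fixed integer polynomial R. For any root α of P with |α| > 1 of multiplicity m, and any sufficiently small disk D around α contained in {|z| > 1} and containing no other root of P, there exists N such that for all n > N the polynomial Q_n has exactly m roots (counted with multiplicity) in D. -/
/-!
On the circle `|z - α| = ρ` we have `|z| ≥ a > 1` and `|P(z)| ≥ b > 0`, so for large `n` the
term `z^n P(z)` dominates `ε R(z)` there. A polynomial Rouché theorem then shows that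
`z^n P + ε R` and `z^n P` have equally many roots in the disk, and since `0` lies outside the
disk the latter are exactly the copies of `α`.

The Rouché theorem is proved without contour integrals: along `f + t h`, `t ∈ [0, 1]`, the number
of roots in a set `s` is locally constant as long as no root meets `frontier s`. Local constancy is
continuity of roots: along an ultrafilter, enumerations of the roots stay in a compact set (Cauchy's
bound), hence converge, and their limits enumerate the roots of the limit polynomial.
-/

open Polynomial Metric Filter
open scoped Classical Topology

lemma eventually_mem_iff_of_notMem_frontier {X : Type*} [TopologicalSpace X] {s : Set X}
    {w : X} (hw : w ∉ frontier s) : ∀ᶠ x in 𝓝 w, x ∈ s ↔ w ∈ s := by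
  rw [← Set.mem_compl_iff, compl_frontier_eq_union_interior] at hw
  rcases hw with hw | hw
  · filter_upwards [mem_interior_iff_mem_nhds.mp hw] with x hx
    exact iff_of_true hx (interior_subset hw)
  · filter_upwards [mem_interior_iff_mem_nhds.mp hw] with x hx
    exact iff_of_false hx (interior_subset hw)

lemma Multiset.exists_eq_univ_val_map {α : Type*} (s : Multiset α) {D : ℕ}
    (h : Multiset.card s = D) : ∃ e : Fin D → α, s = Finset.univ.val.map e := by
  obtain ⟨L, rfl⟩ : ∃ L : List α, (L : Multiset α) = s := ⟨s.toList, s.coe_toList⟩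
  obtain rfl : L.length = D := by simpa using h
  exact ⟨L.get, by rw [Fin.univ_val_map, List.ofFn_get]⟩

lemma eventually_norm_lt_norm_pow_mul {𝕜 : Type*} [NormedDivisionRing 𝕜] {K : Set 𝕜}
    (hK : IsCompact K) (hK1 : ∀ z ∈ K, 1 < ‖z‖) {φ ψ : 𝕜 → 𝕜}
    (hφ : ContinuousOn φ K) (hψ : ContinuousOn ψ K) (hφ0 : ∀ z ∈ K, φ z ≠ 0) :
    ∀ᶠ n in atTop, ∀ z ∈ K, ‖ψ z‖ < ‖z ^ n * φ z‖ := by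
  obtain ⟨a, ha, hKa⟩ := hK.exists_forall_le' continuous_norm.continuousOn hK1
  obtain ⟨b, hb, hKb⟩ :=
    hK.exists_forall_le' hφ.norm fun z hz => norm_pos_iff.mpr (hφ0 z hz)
  obtain ⟨c, hKc⟩ := hK.exists_bound_of_continuousOn hψ
  filter_upwards [((tendsto_pow_atTop_atTop_of_one_lt ha).atTop_mul_const hb).eventually_gt_atTop c]
    with n hn z hz
  calc ‖ψ z‖ ≤ c := hKc z hz
    _ < a ^ n * b := hn
    _ ≤ ‖z ^ n * φ z‖ := by
      rw [norm_mul, norm_pow]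
      gcongr
      exacts [hKa z hz, hKb z hz]

namespace Polynomial

lemma Monic.norm_lt_of_isRoot {K : Type*} [NormedDivisionRing K] {f : K[X]} (hf : f.Monic)
    {B : ℝ} (hB0 : 0 ≤ B) (hB : ∀ j < f.natDegree, ‖f.coeff j‖ ≤ B) {z : K}
    (hz : f.IsRoot z) : ‖z‖ < B + 1 := by
  lift B to NNReal using hB0
  have hbound : f.cauchyBound ≤ B + 1 := by
    rw [cauchyBound, hf.leadingCoeff, nnnorm_one, div_one]
    gcongr
    exact Finset.sup_le fun j hj => by exact_mod_cast hB j (Finset.mem_range.mp hj)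
  exact_mod_cast (hz.norm_lt_cauchyBound hf.ne_zero).trans_le hbound

lemma tendsto_eval_of_tendsto_coeff {R ι : Type*} [Semiring R] [TopologicalSpace R]
    [IsTopologicalSemiring R] {l : Filter ι} {f : ι → R[X]} {g : R[X]} {D : ℕ}
    (hfd : ∀ i, (f i).natDegree ≤ D) (hgd : g.natDegree ≤ D)
    (hc : ∀ j, Tendsto (fun i => (f i).coeff j) l (𝓝 (g.coeff j))) (x : R) :
    Tendsto (fun i => (f i).eval x) l (𝓝 (g.eval x)) := by
  simp only [fun i => eval_eq_sum_range' (Nat.lt_succ_of_le (hfd i)) x,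
    eval_eq_sum_range' (Nat.lt_succ_of_le hgd) x]
  exact tendsto_finsetSum _ fun j _ => (hc j).mul_const _

section RootContinuity

variable {ι : Type*} {f : ι → ℂ[X]} {g : ℂ[X]} {D : ℕ}

lemma exists_eventually_norm_roots_le {l : Filter ι} (hfm : ∀ i, (f i).Monic)
    (hfd : ∀ i, (f i).natDegree = D)
    (hc : ∀ j, Tendsto (fun i => (f i).coeff j) l (𝓝 (g.coeff j))) :
    ∃ M, ∀ᶠ i in l, ∀ z ∈ (f i).roots, ‖z‖ ≤ M := by
  set B := ∑ j ∈ Finset.range D, (‖g.coeff j‖ + 1)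
  have hcoeff : ∀ᶠ i in l, ∀ j ∈ Finset.range D, ‖(f i).coeff j‖ ≤ B := by
    rw [eventually_all_finset]
    intro j hj
    filter_upwards [(hc j).norm.eventually (gt_mem_nhds (lt_add_one ‖g.coeff j‖))] with i hi
    exact hi.le.trans
      (Finset.single_le_sum (f := fun k => ‖g.coeff k‖ + 1) (fun k _ => by positivity) hj)
  refine ⟨B + 1, ?_⟩
  filter_upwards [hcoeff] with i hi z hz
  refine ((hfm i).norm_lt_of_isRoot (by positivity) (fun j hj => hi j ?_) ?_).le
  · rwa [Finset.mem_range, ← hfd i]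
  · exact isRoot_of_mem_roots hz

lemma roots_eq_univ_val_map_of_tendsto {l : Filter ι} [l.NeBot] (hfm : ∀ i, (f i).Monic)
    (hfd : ∀ i, (f i).natDegree = D) (hgd : g.natDegree ≤ D)
    (hc : ∀ j, Tendsto (fun i => (f i).coeff j) l (𝓝 (g.coeff j)))
    {e : ι → Fin D → ℂ} (he : ∀ i, (f i).roots = Finset.univ.val.map (e i))
    {w : Fin D → ℂ} (hw : Tendsto e l (𝓝 w)) :
    g.roots = Finset.univ.val.map w := by
  have heval : ∀ x, g.eval x = ∏ j, (x - w j) := fun x => by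
    refine tendsto_nhds_unique (tendsto_eval_of_tendsto_coeff (fun i => (hfd i).le) hgd hc x) ?_
    have hprod : ∀ i, (f i).eval x = ∏ j, (x - e i j) := fun i => by
      rw [(IsAlgClosed.splits (f i)).eval_eq_prod_roots_of_monic (hfm i), he i, Multiset.map_map]
      rfl
    simp only [hprod]
    exact tendsto_finsetProd _ fun j _ =>
      tendsto_const_nhds.sub (((continuous_apply j).tendsto w).comp hw)
  have hg : g = (Finset.univ.val.map w |>.map (X - C ·)).prod := by
    refine Polynomial.funext fun x => ?_
    simp only [heval, eval_multiset_prod, Multiset.map_map, Function.comp_def, eval_sub, eval_X,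
      eval_C]
    rfl
  rw [hg, roots_multiset_prod_X_sub_C]

variable {s : Set ℂ}

lemma eventually_card_filter_roots_eq_of_ultrafilter (u : Ultrafilter ι)
    (hfm : ∀ i, (f i).Monic) (hfd : ∀ i, (f i).natDegree = D) (hgd : g.natDegree ≤ D)
    (hc : ∀ j, Tendsto (fun i => (f i).coeff j) u (𝓝 (g.coeff j)))
    (hs : ∀ z ∈ frontier s, ¬ g.IsRoot z) :
    ∀ᶠ i in u, ((f i).roots.filter (· ∈ s)).card = (g.roots.filter (· ∈ s)).card := by
  choose e he using fun i => (f i).roots.exists_eq_univ_val_map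
    ((splits_iff_card_roots.mp (IsAlgClosed.splits (f i))).trans (hfd i))
  obtain ⟨M, hM⟩ := exists_eventually_norm_roots_le hfm hfd hc
  have hK : IsCompact (Set.univ.pi fun _ : Fin D => closedBall (0 : ℂ) M) :=
    isCompact_univ_pi fun _ => isCompact_closedBall _ _
  have heK : ↑(u.map e) ≤ 𝓟 (Set.univ.pi fun _ : Fin D => closedBall (0 : ℂ) M) := by
    rw [Ultrafilter.coe_map, le_principal_iff, mem_map]
    filter_upwards [hM] with i hi
    exact Set.mem_univ_pi.mpr fun j => mem_closedBall_zero_iff.mpr <|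
      hi _ (by rw [he i]; exact Multiset.mem_map_of_mem _ (Finset.mem_univ_val j))
  obtain ⟨w, -, hw⟩ := hK.ultrafilter_le_nhds _ heK
  replace hw : Tendsto e u (𝓝 w) := hw
  have hg := roots_eq_univ_val_map_of_tendsto hfm hfd hgd hc he hw
  have hmem : ∀ j, ∀ᶠ i in u, e i j ∈ s ↔ w j ∈ s := fun j => by
    have hroot : g.IsRoot (w j) :=
      isRoot_of_mem_roots (hg ▸ Multiset.mem_map_of_mem _ (Finset.mem_univ_val j))
    exact ((continuous_apply j).tendsto w).comp hw
      |>.eventually (eventually_mem_iff_of_notMem_frontier fun h => hs _ h hroot)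
  filter_upwards [eventually_all.mpr hmem] with i hi
  rw [he i, hg, Multiset.filter_map, Multiset.filter_map, Multiset.card_map, Multiset.card_map]
  exact congrArg _ (Multiset.filter_congr fun j _ => hi j)

lemma eventually_card_filter_roots_eq (l : Filter ι)
    (hfm : ∀ i, (f i).Monic) (hfd : ∀ i, (f i).natDegree = D) (hgd : g.natDegree ≤ D)
    (hc : ∀ j, Tendsto (fun i => (f i).coeff j) l (𝓝 (g.coeff j)))
    (hs : ∀ z ∈ frontier s, ¬ g.IsRoot z) :
    ∀ᶠ i in l, ((f i).roots.filter (· ∈ s)).card = (g.roots.filter (· ∈ s)).card :=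
  mem_iff_ultrafilter.mpr fun u hu =>
    eventually_card_filter_roots_eq_of_ultrafilter u hfm hfd hgd (fun j => (hc j).mono_left hu) hs

end RootContinuity

theorem card_filter_roots_add_eq_of_norm_lt {f h : ℂ[X]} (hf : f.Monic)
    (hdeg : h.degree < f.degree) {s : Set ℂ}
    (hfront : ∀ z ∈ frontier s, ‖h.eval z‖ < ‖f.eval z‖) :
    ((f + h).roots.filter (· ∈ s)).card = (f.roots.filter (· ∈ s)).card := by
  set F : ℝ → ℂ[X] := fun t => f + (t : ℂ) • h with hF
  have hdegF : ∀ t : ℝ, ((t : ℂ) • h).degree < f.degree := fun t =>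
    (degree_smul_le _ _).trans_lt hdeg
  have hm : ∀ t, (F t).Monic := fun t => hf.add_of_left (hdegF t)
  have hd : ∀ t, (F t).natDegree = f.natDegree := fun t =>
    natDegree_add_eq_left_of_degree_lt (hdegF t)
  have hroot : ∀ t ∈ Set.Icc (0 : ℝ) 1, ∀ z ∈ frontier s, ¬ (F t).IsRoot z := by
    intro t ht z hz hFz
    have hfz : f.eval z = -((t : ℂ) * h.eval z) := by
      simpa [hF, add_eq_zero_iff_eq_neg] using hFz
    have : ‖f.eval z‖ ≤ ‖h.eval z‖ := by
      rw [hfz, norm_neg, norm_mul, Complex.norm_real, Real.norm_of_nonneg ht.1]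
      exact mul_le_of_le_one_left (norm_nonneg _) ht.2
    exact (hfront z hz).not_ge this
  have hcount : ContinuousOn (fun t => ((F t).roots.filter (· ∈ s)).card) (Set.Icc 0 1) := by
    intro t ht
    have hc : ∀ j, Tendsto (fun t' => (F t').coeff j) (𝓝[Set.Icc 0 1] t)
        (𝓝 ((F t).coeff j)) := by
      intro j
      simp only [hF, coeff_add, coeff_smul, smul_eq_mul]
      exact ((continuous_const.add (Complex.continuous_ofReal.mul continuous_const)).tendsto
        t).mono_left nhdsWithin_le_nhds
    exact tendsto_const_nhds.congr'
      ((eventually_card_filter_roots_eq _ hm hd (hd t).le hc (hroot t ht)).mono fun _ h => h.symm)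
  simpa [hF] using isPreconnected_Icc.constant hcount (Set.right_mem_Icc.mpr zero_le_one)
    (Set.left_mem_Icc.mpr zero_le_one)

lemma card_filter_roots_X_pow_mul {R : Type*} [CommRing R] [IsDomain R] {p : R[X]} (hp : p ≠ 0)
    (n : ℕ) {s : Set R} {α : R} (h0 : 0 ∉ s) (hα : α ∈ s)
    (hs : ∀ z ∈ s, p.IsRoot z → z = α) :
    ((X ^ n * p).roots.filter (· ∈ s)).card = p.rootMultiplicity α := by
  have hzeros : (n • ({0} : Multiset R)).filter (· ∈ s) = 0 :=
    Multiset.filter_eq_nil.mpr fun z hz => by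
      rw [Multiset.nsmul_singleton] at hz
      rwa [Multiset.eq_of_mem_replicate hz]
  have hp_roots : p.roots.filter (· ∈ s) = p.roots.filter (α = ·) :=
    Multiset.filter_congr fun z hz =>
      ⟨fun h => (hs z h (isRoot_of_mem_roots hz)).symm, fun h => h ▸ hα⟩
  rw [roots_mul (mul_ne_zero (pow_ne_zero n X_ne_zero) hp), roots_pow, roots_X,
    Multiset.filter_add, hzeros, zero_add, hp_roots, ← Multiset.count_eq_card_filter_eq,
    count_roots]

end Polynomial

theorem stmt_0_general (P R : Polynomial ℤ) (hP : P.Monic) (ε : ℤ)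
    (α : ℂ)
    (ρ : ℝ) (hρ : 0 < ρ)
    (hD : closedBall α ρ ⊆ {z : ℂ | 1 < ‖z‖})
    (honly : ∀ z ∈ closedBall α ρ, (P.map (Int.castRingHom ℂ)).IsRoot z → z = α) :
    ∃ N : ℕ, ∀ n : ℕ, N < n →
      ((((X ^ n * P + C ε * R).map (Int.castRingHom ℂ)).roots.filter
          (fun z => z ∈ closedBall α ρ)).card
        = (P.map (Int.castRingHom ℂ)).rootMultiplicity α) := by
  set p := P.map (Int.castRingHom ℂ)
  set r := (C ε * R).map (Int.castRingHom ℂ)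
  have hp : p.Monic := hP.map _
  have hp_sphere : ∀ z ∈ sphere α ρ, p.eval z ≠ 0 := fun z hz hpz => by
    rw [honly z (sphere_subset_closedBall hz) hpz, mem_sphere, dist_self] at hz
    exact hρ.ne hz
  obtain ⟨N, hN⟩ := eventually_atTop.mp <|
    eventually_norm_lt_norm_pow_mul (isCompact_sphere α ρ)
      (fun z hz => hD (sphere_subset_closedBall hz)) p.continuous.continuousOn
      r.continuous.continuousOn hp_sphere
  refine ⟨max N R.natDegree, fun n hn => ?_⟩
  have hdeg : r.degree < (X ^ n * p).degree := by
    refine degree_lt_degree ?_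
    rw [(monic_X_pow n).natDegree_mul hp, natDegree_X_pow]
    calc r.natDegree ≤ R.natDegree := natDegree_map_le.trans (natDegree_C_mul_le _ _)
      _ < n := (le_max_right _ _).trans_lt hn
      _ ≤ n + p.natDegree := Nat.le_add_right _ _
  have hfront :
      ∀ z ∈ frontier (closedBall α ρ), ‖r.eval z‖ < ‖(X ^ n * p).eval z‖ := by
    rw [frontier_closedBall']
    simpa using hN n ((le_max_left _ _).trans hn.le)
  rw [Polynomial.map_add, Polynomial.map_mul, Polynomial.map_pow, Polynomial.map_X,
    card_filter_roots_add_eq_of_norm_lt ((monic_X_pow n).mul hp) hdeg hfront,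
    card_filter_roots_X_pow_mul hp.ne_zero n (fun h0 => (hD h0).out.not_ge (by simp))
      (mem_closedBall_self hρ.le) honly]

/-- Rouché-type lemma: the roots of `Q_n(t) = t^n P(t) ± R(t)` outside the unit
circle converge (with multiplicity) to those of `P`. -/
theorem stmt_0 (P R : Polynomial ℤ) (hP : P.Monic) (ε : ℤ) (hε : ε = 1 ∨ ε = -1)
    (α : ℂ) (hroot : (P.map (Int.castRingHom ℂ)).IsRoot α)
    (hout : 1 < ‖α‖)
    (ρ : ℝ) (hρ : 0 < ρ)
    (hD : closedBall α ρ ⊆ {z : ℂ | 1 < ‖z‖})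
    (honly : ∀ z ∈ closedBall α ρ, (P.map (Int.castRingHom ℂ)).IsRoot z → z = α) :
    ∃ N : ℕ, ∀ n : ℕ, N < n →
      ((((X ^ n * P + C ε * R).map (Int.castRingHom ℂ)).roots.filter
          (fun z => z ∈ closedBall α ρ)).card
        = (P.map (Int.castRingHom ℂ)).rootMultiplicity α) :=
  stmt_0_general P R hP ε α ρ hρ hD honly
end

section
/- Let P be a monic integer polynomial of degree d with no roots on the unit circle, and set P_*(t) = t^d P(1/t). Then for every positive integer n, the number of roots of Q_n(t) = t^n P(t) ± P_*(t) outside the closed unit disk (counted with multiplicity) is at most the number of roots of P outside the closed unit disk. -/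
/-!
Roots of monic polynomials depend continuously on the coefficients: along a continuous family of
monic polynomials of fixed degree, the number of roots in an open set is lower semicontinuous in
the parameter, and it is locally constant as long as no root lies on the boundary. Apply this to
`g s = t ^ n P + s ε P_*`, `0 ≤ s ≤ 1`. On the unit circle `|t ^ n P(t)| = |P(t)| = |P_*(t)|`,
and `P` does not vanish there, so for `s < 1` no root of `g s` lies on the circle. Hence
`N(g s) = N(g 0) = N(P)` for `0 ≤ s < 1`, and `N(Q_n) = N(g 1) ≤ N(g s)` for `s` close to `1`.
-/

open Polynomial
open scoped Classical

/-- The number of roots of a polynomial (with integer coefficients) outside the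
closed unit disk, counted with multiplicity. -/
noncomputable def bigN (f : Polynomial ℤ) : ℕ :=
  ((f.aroots ℂ).filter (fun z => 1 < ‖z‖)).card

open Filter Topology Finset

namespace Polynomial

noncomputable def rootCountIn (U : Set ℂ) (p : ℂ[X]) : ℕ :=
  p.roots.countP (· ∈ U)

lemma exists_roots_eq_map_univ {d : ℕ} {p : ℂ[X]} (hpd : p.natDegree = d) :
    ∃ r : Fin d → ℂ, p.roots = univ.val.map r := by
  have hlen : p.roots.toList.length = d := by
    rw [Multiset.length_toList, IsAlgClosed.card_roots_eq_natDegree, hpd]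
  subst hlen
  exact ⟨p.roots.toList.get, by rw [Fin.univ_val_map, List.ofFn_get, Multiset.coe_toList]⟩

lemma Monic.eq_prod_X_sub_C_of_roots_eq {d : ℕ} {p : ℂ[X]} (hp : p.Monic) {r : Fin d → ℂ}
    (hr : p.roots = univ.val.map r) : p = ∏ i, (X - C (r i)) := by
  conv_lhs => rw [(IsAlgClosed.splits p).eq_prod_roots_of_monic hp, hr, Multiset.map_map]
  rfl

lemma roots_prod_X_sub_C_fin {d : ℕ} (r : Fin d → ℂ) :
    (∏ i, (X - C (r i))).roots = univ.val.map r := by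
  rw [← roots_multiset_prod_X_sub_C (univ.val.map r), Multiset.map_map]
  rfl

lemma rootCountIn_of_roots_eq {U : Set ℂ} {d : ℕ} {p : ℂ[X]} {r : Fin d → ℂ}
    (hr : p.roots = univ.val.map r) : rootCountIn U p = #{i | r i ∈ U} := by
  rw [rootCountIn, hr, Multiset.countP_map, card, filter_val]

lemma rootCountIn_union {U V : Set ℂ} (hUV : Disjoint U V) (p : ℂ[X]) :
    rootCountIn (U ∪ V) p = rootCountIn U p + rootCountIn V p := by
  unfold rootCountIn
  induction p.roots using Multiset.induction_on with
  | empty => simp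
  | cons a s ih =>
    have hUVa : a ∈ U → a ∉ V := fun h => Set.disjoint_left.mp hUV h
    rw [Multiset.countP_cons, Multiset.countP_cons, Multiset.countP_cons, ih]
    by_cases haU : a ∈ U <;> by_cases haV : a ∈ V <;> simp_all <;> omega

lemma rootCountIn_le_natDegree (U : Set ℂ) (p : ℂ[X]) : rootCountIn U p ≤ p.natDegree :=
  IsAlgClosed.card_roots_eq_natDegree (p := p) ▸ Multiset.countP_le_card _ _

lemma rootCountIn_eq_natDegree {U : Set ℂ} {p : ℂ[X]} (hp : ∀ z ∈ p.roots, z ∈ U) :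
    rootCountIn U p = p.natDegree :=
  IsAlgClosed.card_roots_eq_natDegree (p := p) ▸ Multiset.countP_eq_card.mpr hp

lemma rootCountIn_X_pow_mul {U : Set ℂ} (hU : (0 : ℂ) ∉ U) {p : ℂ[X]} (hp : p ≠ 0) (n : ℕ) :
    rootCountIn U (X ^ n * p) = rootCountIn U p := by
  rw [rootCountIn, rootCountIn, roots_mul (mul_ne_zero (pow_ne_zero n X_ne_zero) hp), roots_X_pow,
    Multiset.countP_add, Multiset.countP_nsmul]
  simp [Multiset.countP_eq_zero, hU]

lemma Monic.norm_lt_of_isRoot_s1 {p : ℂ[X]} (hp : p.Monic) {M : ℝ} (hM₀ : 0 ≤ M)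
    (hM : ∀ i < p.natDegree, ‖p.coeff i‖ ≤ M) {a : ℂ} (ha : p.IsRoot a) : ‖a‖ < M + 1 := by
  have hbound : cauchyBound p ≤ ⟨M, hM₀⟩ + 1 := by
    rw [cauchyBound, hp.leadingCoeff, nnnorm_one, div_one]
    refine add_le_add_left (Finset.sup_le fun i hi => ?_) 1
    exact hM i (Finset.mem_range.mp hi)
  exact_mod_cast (ha.norm_lt_cauchyBound hp.ne_zero).trans_le hbound

section Sequences

variable {d : ℕ} {p : ℕ → ℂ[X]} {q : ℂ[X]}

lemma roots_eq_map_of_tendsto (hp : ∀ k, (p k).Monic) (hpd : ∀ k, (p k).natDegree = d)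
    (hqd : q.natDegree ≤ d) (hlim : ∀ i, Tendsto (fun k => (p k).coeff i) atTop (𝓝 (q.coeff i)))
    {r : ℕ → Fin d → ℂ} {r₀ : Fin d → ℂ} (hr : ∀ k, (p k).roots = univ.val.map (r k))
    (hconv : Tendsto r atTop (𝓝 r₀)) : q.roots = univ.val.map r₀ := by
  suffices q = ∏ i, (X - C (r₀ i)) by rw [this, roots_prod_X_sub_C_fin]
  refine Polynomial.funext fun z =>
    tendsto_nhds_unique (f := fun k => (p k).eval z) (l := atTop) ?_ ?_
  · simp only [eval_eq_sum_range' (Nat.lt_succ_of_le hqd),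
      eval_eq_sum_range' ((hpd _).trans_lt d.lt_succ_self)]
    exact tendsto_finsetSum _ fun i _ => (hlim i).mul_const _
  · have hprod : ∀ k, (p k).eval z = ∏ i, (z - r k i) := fun k => by
      rw [(hp k).eq_prod_X_sub_C_of_roots_eq (hr k), eval_prod]
      simp only [eval_sub, eval_X, eval_C]
    simp only [hprod, eval_prod, eval_sub, eval_X, eval_C]
    exact tendsto_finsetProd _ fun i _ => tendsto_const_nhds.sub (tendsto_pi_nhds.mp hconv i)

lemma exists_subseq_roots_tendsto (hp : ∀ k, (p k).Monic) (hpd : ∀ k, (p k).natDegree = d)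
    (hqd : q.natDegree ≤ d) (hlim : ∀ i, Tendsto (fun k => (p k).coeff i) atTop (𝓝 (q.coeff i))) :
    ∃ φ : ℕ → ℕ, StrictMono φ ∧ ∃ r : ℕ → Fin d → ℂ, ∃ r₀ : Fin d → ℂ,
      (∀ k, (p (φ k)).roots = univ.val.map (r k)) ∧ q.roots = univ.val.map r₀ ∧
        Tendsto r atTop (𝓝 r₀) := by
  choose r hr using fun k => exists_roots_eq_map_univ (hpd k)
  obtain ⟨M, hM₀, hM⟩ : ∃ M, 0 ≤ M ∧ ∀ k, ∀ i < d, ‖(p k).coeff i‖ ≤ M := by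
    obtain ⟨M, hM⟩ := isBounded_iff_forall_norm_le.mp <| Metric.isBounded_range_of_tendsto _ <|
      tendsto_pi_nhds.mpr fun i : Fin d => hlim i
    refine ⟨max M 0, le_max_right _ _, fun k i hi => ?_⟩
    exact (norm_le_pi_norm (fun i : Fin d => (p k).coeff i) ⟨i, hi⟩).trans
      ((hM _ ⟨k, rfl⟩).trans (le_max_left _ _))
  have hbdd : ∀ k, r k ∈ Metric.closedBall 0 (M + 1) := fun k => by
    rw [mem_closedBall_zero_iff, pi_norm_le_iff_of_nonneg (by positivity)]
    intro i
    have hroot : r k i ∈ (p k).roots := by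
      rw [hr k]
      exact Multiset.mem_map_of_mem _ (mem_univ_val i)
    exact ((hp k).norm_lt_of_isRoot_s1 hM₀ (fun j hj => hM k j (hpd k ▸ hj))
      (isRoot_of_mem_roots hroot)).le
  obtain ⟨r₀, -, φ, hφ, hconv⟩ := tendsto_subseq_of_bounded Metric.isBounded_closedBall hbdd
  refine ⟨φ, hφ, r ∘ φ, r₀, fun k => hr (φ k), ?_, hconv⟩
  exact roots_eq_map_of_tendsto (fun k => hp (φ k)) (fun k => hpd (φ k)) hqd
    (fun i => (hlim i).comp hφ.tendsto_atTop) (fun k => hr (φ k)) hconv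

lemma frequently_rootCountIn_le {U : Set ℂ} (hU : IsOpen U) (hp : ∀ k, (p k).Monic)
    (hpd : ∀ k, (p k).natDegree = d) (hqd : q.natDegree ≤ d)
    (hlim : ∀ i, Tendsto (fun k => (p k).coeff i) atTop (𝓝 (q.coeff i))) :
    ∃ᶠ k in atTop, rootCountIn U q ≤ rootCountIn U (p k) := by
  obtain ⟨φ, hφ, r, r₀, hr, hr₀, hconv⟩ := exists_subseq_roots_tendsto hp hpd hqd hlim
  have hstable : ∀ᶠ k in atTop, ∀ i, r₀ i ∈ U → r k i ∈ U :=
    eventually_all.mpr fun i => by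
      by_cases hi : r₀ i ∈ U
      · exact Eventually.mono (tendsto_pi_nhds.mp hconv i (hU.mem_nhds hi)) fun _ h _ => h
      · exact Eventually.of_forall fun _ h => absurd h hi
  refine hφ.tendsto_atTop.frequently (hstable.mono fun k hk => ?_).frequently
  rw [rootCountIn_of_roots_eq hr₀, rootCountIn_of_roots_eq (hr k)]
  exact card_le_card (monotone_filter_right _ fun i _ => hk i)

end Sequences

section Families

variable {S : Type*} [TopologicalSpace S] {f : S → ℂ[X]} {d : ℕ} {U V : Set ℂ}

lemma eventually_rootCountIn_le [FirstCountableTopology S] (hU : IsOpen U)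
    (hf : ∀ s, (f s).Monic) (hfd : ∀ s, (f s).natDegree = d) {s₀ : S}
    (hcont : ∀ i, ContinuousAt (fun s => (f s).coeff i) s₀) :
    ∀ᶠ s in 𝓝 s₀, rootCountIn U (f s₀) ≤ rootCountIn U (f s) := by
  by_contra h
  obtain ⟨t, ht, hlt⟩ := exists_seq_forall_of_frequently (not_eventually.mp h)
  obtain ⟨k, hk⟩ := (frequently_rootCountIn_le hU (fun k => hf (t k)) (fun k => hfd (t k))
    (hfd s₀).le fun i => (hcont i).tendsto.comp ht).exists
  exact hlt k hk

lemma eventually_rootCountIn_eq [FirstCountableTopology S] (hU : IsOpen U) (hV : IsOpen V)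
    (hUV : Disjoint U V) (hf : ∀ s, (f s).Monic) (hfd : ∀ s, (f s).natDegree = d) {s₀ : S}
    (hcont : ∀ i, ContinuousAt (fun s => (f s).coeff i) s₀)
    (hroots : ∀ z ∈ (f s₀).roots, z ∈ U ∪ V) :
    ∀ᶠ s in 𝓝 s₀, rootCountIn U (f s) = rootCountIn U (f s₀) := by
  filter_upwards [eventually_rootCountIn_le hU hf hfd hcont,
    eventually_rootCountIn_le hV hf hfd hcont] with s hsU hsV
  have h₀ := rootCountIn_union hUV (f s₀) ▸ rootCountIn_eq_natDegree hroots
  have h := rootCountIn_union hUV (f s) ▸ rootCountIn_le_natDegree (U ∪ V) (f s)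
  rw [hfd] at h₀ h
  omega

lemma rootCountIn_eq_of_isPreconnected [FirstCountableTopology S] {T : Set S}
    (hT : IsPreconnected T) (hU : IsOpen U) (hV : IsOpen V) (hUV : Disjoint U V)
    (hf : ∀ s, (f s).Monic) (hfd : ∀ s, (f s).natDegree = d)
    (hcont : ∀ i, Continuous fun s => (f s).coeff i)
    (hroots : ∀ s ∈ T, ∀ z ∈ (f s).roots, z ∈ U ∪ V) {a b : S} (ha : a ∈ T) (hb : b ∈ T) :
    rootCountIn U (f a) = rootCountIn U (f b) := by
  refine hT.constant (f := fun s => rootCountIn U (f s))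
    (fun s hs => ContinuousAt.continuousWithinAt ?_) ha hb
  rw [ContinuousAt, nhds_discrete ℕ, tendsto_pure]
  exact eventually_rootCountIn_eq hU hV hUV hf hfd (fun i => (hcont i).continuousAt) (hroots s hs)

end Families

lemma reverse_map_of_injective {R S : Type*} [Semiring R] [Semiring S] {f : R →+* S}
    (hf : Function.Injective f) (p : R[X]) : (p.map f).reverse = p.reverse.map f := by
  rw [reverse, reverse, natDegree_map_eq_of_injective hf, reflect_map]

lemma norm_aeval_reverse_of_norm_eq_one (p : ℝ[X]) {z : ℂ} (hz : ‖z‖ = 1) :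
    ‖aeval z p.reverse‖ = ‖aeval z p‖ := by
  have hz₀ : z ≠ 0 := norm_ne_zero_iff.mp (hz ▸ one_ne_zero)
  have : Invertible z⁻¹ := invertibleOfNonzero (inv_ne_zero hz₀)
  have key := eval₂_reverse_mul_pow (algebraMap ℝ ℂ) z⁻¹ p
  rw [invOf_eq_inv, inv_inv, ← aeval_def, ← aeval_def,
    Complex.inv_eq_conj hz, aeval_conj] at key
  simpa [hz] using congrArg norm key

section AddCMul

variable {R : Type*} [Semiring R] {A B : R[X]}

lemma degree_C_mul_lt_of_natDegree_lt (hB : B.natDegree < A.natDegree) (c : R) :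
    (C c * B).degree < A.degree := by
  rw [← smul_eq_C_mul]
  exact (degree_smul_le c B).trans_lt (degree_lt_degree hB)

lemma Monic.add_C_mul_of_natDegree_lt (hA : A.Monic) (hB : B.natDegree < A.natDegree) (c : R) :
    (A + C c * B).Monic :=
  hA.add_of_left (degree_C_mul_lt_of_natDegree_lt hB c)

lemma natDegree_add_C_mul_of_natDegree_lt (hB : B.natDegree < A.natDegree) (c : R) :
    (A + C c * B).natDegree = A.natDegree :=
  natDegree_add_eq_left_of_degree_lt (degree_C_mul_lt_of_natDegree_lt hB c)

end AddCMul

end Polynomial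

lemma bigN_eq_rootCountIn (f : ℤ[X]) :
    bigN f = rootCountIn {z | 1 < ‖z‖} (f.map (algebraMap ℤ ℂ)) := by
  rw [bigN, rootCountIn, aroots_def, Multiset.countP_eq_card_filter]
  rfl

-- Interpolates between `t ^ n P` at `s = 0` and `Q_n` at `s = 1`.
noncomputable def salemBoydFamily (P : ℤ[X]) (n : ℕ) (ε : ℤ) (s : ℝ) : ℂ[X] :=
  (X ^ n * P).map (algebraMap ℤ ℂ) + C ((s : ℂ) * ε) * P.reverse.map (algebraMap ℤ ℂ)

section SalemBoydFamily

variable {P : ℤ[X]} {n : ℕ} {ε : ℤ}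

lemma natDegree_reverse_map_lt (hP : P.Monic) (hn : 1 ≤ n) :
    (P.reverse.map (algebraMap ℤ ℂ)).natDegree < ((X ^ n * P).map (algebraMap ℤ ℂ)).natDegree := by
  have hinj : Function.Injective (algebraMap ℤ ℂ) := RingHom.injective_int _
  rw [natDegree_map_eq_of_injective hinj, natDegree_map_eq_of_injective hinj,
    (monic_X_pow n).natDegree_mul hP, natDegree_X_pow]
  have := reverse_natDegree_le P
  omega

lemma monic_salemBoydFamily (hP : P.Monic) (hn : 1 ≤ n) (s : ℝ) :
    (salemBoydFamily P n ε s).Monic :=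
  (((monic_X_pow n).mul hP).map _).add_C_mul_of_natDegree_lt (natDegree_reverse_map_lt hP hn) _

lemma natDegree_salemBoydFamily (hP : P.Monic) (hn : 1 ≤ n) (s : ℝ) :
    (salemBoydFamily P n ε s).natDegree = ((X ^ n * P).map (algebraMap ℤ ℂ)).natDegree :=
  natDegree_add_C_mul_of_natDegree_lt (natDegree_reverse_map_lt hP hn) _

lemma continuous_coeff_salemBoydFamily (i : ℕ) :
    Continuous fun s => (salemBoydFamily P n ε s).coeff i := by
  simp only [salemBoydFamily, coeff_add, coeff_C_mul]
  fun_prop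

lemma norm_ne_one_of_mem_roots_salemBoydFamily (hcirc : ∀ z : ℂ, aeval z P = 0 → ‖z‖ ≠ 1)
    (hε : |ε| ≤ 1) {s : ℝ} (hs : |s| < 1) {z : ℂ} (hz : z ∈ (salemBoydFamily P n ε s).roots) :
    ‖z‖ ≠ 1 := by
  intro hz₁
  have hroot : aeval z (X ^ n * P) + (s * ε) * aeval z P.reverse = 0 := by
    have := isRoot_of_mem_roots hz
    rwa [salemBoydFamily, IsRoot, eval_add, eval_mul, eval_C, eval_map_algebraMap,
      eval_map_algebraMap] at this
  have hrev : ‖aeval z P.reverse‖ = ‖aeval z P‖ := by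
    rw [← aeval_map_algebraMap ℝ, ← reverse_map_of_injective (RingHom.injective_int _),
      norm_aeval_reverse_of_norm_eq_one _ hz₁, aeval_map_algebraMap]
  have hnorm : ‖aeval z P‖ = |s| * |ε| * ‖aeval z P‖ :=
    calc ‖aeval z P‖ = ‖aeval z (X ^ n * P)‖ := by simp [hz₁]
      _ = ‖(s * ε) * aeval z P.reverse‖ := by rw [eq_neg_of_add_eq_zero_left hroot, norm_neg]
      _ = |s| * |ε| * ‖aeval z P‖ := by simp [hrev]
  have hP₀ : 0 < ‖aeval z P‖ := norm_pos_iff.mpr fun h => hcirc z h hz₁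
  have hsε : |s| * |ε| < 1 := by
    calc |s| * |ε| ≤ |s| * 1 := by gcongr; exact_mod_cast hε
      _ < 1 := by rwa [mul_one]
  nlinarith

lemma rootCountIn_salemBoydFamily_zero (hP : P.Monic) :
    rootCountIn {z | 1 < ‖z‖} (salemBoydFamily P n ε 0) = bigN P := by
  simp only [salemBoydFamily, Complex.ofReal_zero, zero_mul, C_0, add_zero, Polynomial.map_mul,
    Polynomial.map_pow, map_X]
  rw [rootCountIn_X_pow_mul (by simp) (hP.map _).ne_zero, bigN_eq_rootCountIn]

lemma bigN_eq_rootCountIn_salemBoydFamily_one :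
    bigN (X ^ n * P + C ε * P.reverse) = rootCountIn {z | 1 < ‖z‖} (salemBoydFamily P n ε 1) := by
  simp [bigN_eq_rootCountIn, salemBoydFamily]

end SalemBoydFamily

/-- For a monic integer polynomial `P` with no roots on the unit circle, each
polynomial `Q_n(t) = t^n P(t) ± P_*(t)` of the Salem-Boyd sequence has at most
`N(P)` roots outside the closed unit disk. -/
theorem stmt_1 (P : Polynomial ℤ) (hP : P.Monic)
    (hcirc : ∀ z : ℂ, (Polynomial.aeval z) P = 0 → ‖z‖ ≠ 1)
    (ε : ℤ) (hε : ε = 1 ∨ ε = -1) :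
    ∀ n : ℕ, 1 ≤ n → bigN (X ^ n * P + C ε * P.reverse) ≤ bigN P := by
  intro n hn
  set g := salemBoydFamily P n ε
  set U := {z : ℂ | 1 < ‖z‖}
  set V := {z : ℂ | ‖z‖ < 1}
  have hU : IsOpen U := isOpen_lt continuous_const continuous_norm
  have hV : IsOpen V := isOpen_lt continuous_norm continuous_const
  have hUV : Disjoint U V := Set.disjoint_left.mpr fun _ (h : 1 < ‖_‖) h' => lt_asymm h h'
  have hε₁ : |ε| ≤ 1 := by rcases hε with rfl | rfl <;> norm_num
  have hroots : ∀ s ∈ Set.Ico (0 : ℝ) 1, ∀ z ∈ (g s).roots, z ∈ U ∪ V := fun s hs z hz =>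
    (norm_ne_one_of_mem_roots_salemBoydFamily hcirc hε₁ (abs_lt.mpr ⟨by linarith [hs.1], hs.2⟩)
      hz).lt_or_gt.symm
  have hg := monic_salemBoydFamily (ε := ε) hP hn
  have hgd := natDegree_salemBoydFamily (ε := ε) hP hn
  have hgc := continuous_coeff_salemBoydFamily (P := P) (n := n) (ε := ε)
  obtain ⟨s, hs₁, hs⟩ := (((eventually_rootCountIn_le hU hg hgd fun i =>
    (hgc i).continuousAt).filter_mono nhdsWithin_le_nhds).and (Ioo_mem_nhdsLT zero_lt_one)).exists
  calc bigN (X ^ n * P + C ε * P.reverse) = rootCountIn U (g 1) :=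
        bigN_eq_rootCountIn_salemBoydFamily_one
    _ ≤ rootCountIn U (g s) := hs₁
    _ = rootCountIn U (g 0) := rootCountIn_eq_of_isPreconnected isPreconnected_Ico hU hV hUV hg
        hgd hgc hroots ⟨hs.1.le, hs.2⟩ ⟨le_rfl, zero_lt_one⟩
    _ = bigN P := rootCountIn_salemBoydFamily_zero hP
end

section
/- For P_m(t) = t^{m+2} - t^{m+1} + (-1)^m 2t, the largest absolute value λ(P_m) of a root of P_m tends to 1 as m → ∞. Precisely: for every ε > 0 there exists M such that for all m > M, every root of P_m has absolute value at most 1 + ε. -/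
open Polynomial

/-! If `z ≠ 0` is a root of `t^{m+2} - t^{m+1} + c t`, then `z^m (z - 1) = -c`, so a root with
`|z| > 1` satisfies `|z|^m (|z| - 1) ≤ |c|`. For `|z| ≥ 1 + ε` the left side is at least
`(1 + ε)^m ε`, which exceeds `|c| = 2` once `m` is large. -/

theorem norm_pow_mul_sub_one_le_of_root {K : Type*} [NormedField K] {z c : K} {m : ℕ}
    (hz : z ^ (m + 2) - z ^ (m + 1) + c * z = 0) : ‖z‖ ^ m * (‖z‖ - 1) ≤ ‖c‖ := by
  rcases le_or_gt ‖z‖ 1 with hle | hgt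
  · exact (mul_nonpos_of_nonneg_of_nonpos (by positivity) (by linarith)).trans (norm_nonneg c)
  have hz0 : z ≠ 0 := norm_pos_iff.mp (by linarith)
  have hfactor : z ^ m * (z - 1) = -c :=
    mul_left_cancel₀ hz0 (by linear_combination hz)
  calc ‖z‖ ^ m * (‖z‖ - 1) ≤ ‖z‖ ^ m * ‖z - 1‖ := by
        gcongr
        simpa using norm_sub_norm_le z 1
    _ = ‖c‖ := by rw [← norm_pow, ← norm_mul, hfactor, norm_neg]

theorem exists_forall_lt_pow_mul_sub_one {ε : ℝ} (hε : 0 < ε) (C : ℝ) :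
    ∃ M : ℕ, ∀ m, M ≤ m → ∀ r : ℝ, 1 + ε ≤ r → C < r ^ m * (r - 1) := by
  obtain ⟨M, hM⟩ := pow_unbounded_of_one_lt (C / ε) (by linarith : (1 : ℝ) < 1 + ε)
  refine ⟨M, fun m hm r hr => ?_⟩
  calc C < (1 + ε) ^ M * ε := (div_lt_iff₀ hε).mp hM
    _ ≤ (1 + ε) ^ m * ε := by gcongr; linarith
    _ ≤ r ^ m * (r - 1) := by
        gcongr
        · exact pow_nonneg (by linarith) m
        · linarith

/-- `λ(P_m) → 1` as `m → ∞`: for every `ε > 0` there is `M` such that for all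
`m > M` every root of `P_m(t) = t^{m+2} - t^{m+1} + (-1)^m 2 t` has absolute
value at most `1 + ε`. -/
theorem stmt_9 :
    ∀ ε : ℝ, 0 < ε → ∃ M : ℕ, ∀ m : ℕ, M < m →
      ∀ z : ℂ,
        (Polynomial.aeval z)
            ((X : Polynomial ℤ) ^ (m + 2) - X ^ (m + 1) + C ((-1 : ℤ) ^ m * 2) * X) = 0 →
        ‖z‖ ≤ 1 + ε := by
  intro ε hε
  obtain ⟨M, hM⟩ := exists_forall_lt_pow_mul_sub_one hε 2
  refine ⟨M, fun m hm z hz => ?_⟩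
  have hroot : z ^ (m + 2) - z ^ (m + 1) + ((-1) ^ m * 2) * z = 0 := by
    simpa [map_ofNat] using hz
  have hbound := norm_pow_mul_sub_one_le_of_root hroot
  rw [norm_mul, norm_pow, norm_neg, norm_one, one_pow, one_mul, Complex.norm_ofNat] at hbound
  by_contra! hbig
  exact (hM m hm.le ‖z‖ hbig.le).not_ge hbound
end

section
/- Let P be a P-V polynomial for the P-V number θ, with no reciprocal factors and P(1) ≠ 0, and let α_n > 1 be the real root of Q_n^±(t) = t^n P(t) ± P_*(t) outside the unit circle (when it exists). If ±ℓ(P) > 0 (where ℓ(P) is the sign of the lowest-degree nonzero coefficient of P), then the sequence (α_n) is monotone increasing and α_n < θ for all n; if ±ℓ(P) < 0, it is monotone decreasing and α_n > θ. -/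
/-!
A monic integer polynomial with all roots in the open unit disc is a power of `X`: once `X` is
divided out, its constant term is a nonzero integer and, up to sign, the product of its roots.
Hence `P = X^v m^k` with `m` the minimal polynomial of `θ`. If `m` had a root `r ∈ (0, 1/θ]`, the
same product formula would force `m = (X - θ)(X - r)` with `θ r = 1`, a reciprocal factor of `P`.
So `P_*` has no root in `[θ, ∞)`, and `ℓ(P) P_*` is positive there.

Thus `Q_n(θ) = ±P_*(θ)` has the sign of `±ℓ(P)`, which puts `α_n` on the right side of `θ`, while
`Q_{n+1}(α_n) = α_n^n (α_n - 1) P(α_n)` has the opposite sign, so `α_{n+1}` lies strictly between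
`α_n` and `θ`. In the increasing case `P < 0` on `(1, θ)`: `θ` is a simple root of `m`, and `k`
is odd, since for even `k` both `P` and `P_*` are nonnegative on `(0, ∞)`, which is incompatible
with `Q_n(α_n) = 0`.
-/

open Polynomial Set

theorem mem_Ioo_of_unique_solution {α δ : Type*} [ConditionallyCompleteLinearOrder α]
    [TopologicalSpace α] [OrderTopology α] [DenselyOrdered α] [LinearOrder δ] [TopologicalSpace δ]
    [OrderClosedTopology δ] {f : α → δ} {a b c : α} {y : δ} (hab : a ≤ b)
    (hf : ContinuousOn f (Icc a b)) (hfa : f a < y) (hfb : y < f b)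
    (huniq : ∀ x ∈ Ioo a b, f x = y → x = c) : c ∈ Ioo a b := by
  obtain ⟨x, hx, hfx⟩ := intermediate_value_Ioo hab hf ⟨hfa, hfb⟩
  exact huniq x hx hfx ▸ hx

theorem norm_multiset_prod_lt_one {K : Type*} [NormedField K] {s : Multiset K} (hs : s ≠ 0)
    (h : ∀ z ∈ s, ‖z‖ < 1) : ‖s.prod‖ < 1 := by
  induction s using Multiset.induction_on with
  | empty => exact absurd rfl hs
  | cons a t ih =>
    have ha := h a (Multiset.mem_cons_self a t)
    rw [Multiset.prod_cons, norm_mul]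
    rcases eq_or_ne t 0 with rfl | ht
    · simpa using ha
    · exact mul_lt_one_of_nonneg_of_lt_one_left (norm_nonneg a) ha
        (ih ht fun z hz => h z (Multiset.mem_cons_of_mem hz)).le

namespace Polynomial

theorem leadingCoeff_mul_eval_pos {p : ℝ[X]} {c : ℝ} (h : ∀ x, c ≤ x → p.eval x ≠ 0) :
    0 < p.leadingCoeff * p.eval c := by
  have hp : p ≠ 0 := by rintro rfl; exact h c le_rfl eval_zero
  have hlc : p.leadingCoeff ≠ 0 := leadingCoeff_ne_zero.2 hp
  rcases eq_or_ne p.natDegree 0 with hd | hd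
  · rw [eq_C_of_natDegree_eq_zero hd, leadingCoeff_C, eval_C]
    exact mul_self_pos.2 (by simpa [leadingCoeff, hd] using hlc)
  set q := C p.leadingCoeff * p
  have hq : ∀ x, q.eval x = p.leadingCoeff * p.eval x := fun x => eval_C_mul
  have htop : Filter.Tendsto (fun x => q.eval x) Filter.atTop Filter.atTop :=
    q.tendsto_atTop_of_leadingCoeff_nonneg
      (by rw [degree_C_mul hlc]; exact natDegree_pos_iff_degree_pos.1 (Nat.pos_of_ne_zero hd))
      (by rw [leadingCoeff_C_mul_of_isUnit hlc.isUnit]; exact mul_self_nonneg _)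
  obtain ⟨B, hB⟩ := Filter.eventually_atTop.1 (htop.eventually_gt_atTop 0)
  rw [← hq]
  by_contra! hc
  obtain ⟨x, hx, hqx⟩ := intermediate_value_Icc (le_max_left c B) q.continuous.continuousOn
    ⟨hc, (hB _ (le_max_right c B)).le⟩
  dsimp only at hqx
  rw [hq, mul_eq_zero] at hqx
  exact hqx.elim hlc (h x hx.1)

theorem leadingCoeff_mul_aeval_pos {p : ℤ[X]} {c : ℝ} (h : ∀ x : ℝ, c ≤ x → aeval x p ≠ 0) :
    0 < (p.leadingCoeff : ℝ) * aeval c p := by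
  have := leadingCoeff_mul_eval_pos (p := p.map (algebraMap ℤ ℝ)) (c := c)
    (by simpa only [eval_map_algebraMap] using h)
  rwa [leadingCoeff_map_of_injective (RingHom.injective_int _), eval_map_algebraMap] at this

theorem Monic.aeval_pos {p : ℤ[X]} (hp : p.Monic) {c : ℝ} (h : ∀ x : ℝ, c ≤ x → aeval x p ≠ 0) :
    0 < aeval c p := by
  simpa [hp.leadingCoeff] using leadingCoeff_mul_aeval_pos h

theorem Monic.neg_one_pow_rootMultiplicity_mul_eval_pos {p : ℝ[X]} (hp : p.Monic) {c θ : ℝ}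
    (hcθ : c < θ) (h : ∀ x, c ≤ x → x ≠ θ → p.eval x ≠ 0) :
    0 < (-1) ^ p.rootMultiplicity θ * p.eval c := by
  obtain ⟨q, hpq, hθq⟩ := p.exists_eq_pow_rootMultiplicity_mul_and_not_dvd hp.ne_zero θ
  have hq : q.Monic := ((monic_X_sub_C θ).pow _).of_mul_monic_left (hpq ▸ hp)
  have hq_ne : ∀ x, c ≤ x → q.eval x ≠ 0 := by
    intro x hx hqx
    rcases eq_or_ne x θ with rfl | hxθ
    · exact hθq (dvd_iff_isRoot.2 hqx)
    · exact h x hx hxθ (by rw [hpq, eval_mul, hqx, mul_zero])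
  have hqc : 0 < q.eval c := by simpa [hq.leadingCoeff] using leadingCoeff_mul_eval_pos hq_ne
  have hpc : p.eval c = (c - θ) ^ p.rootMultiplicity θ * q.eval c := by
    conv_lhs => rw [hpq]
    simp
  rw [hpc, ← mul_assoc, ← mul_pow]
  exact mul_pos (pow_pos (by linarith) _) hqc

theorem aeval_reverse {R K : Type*} [CommSemiring R] [Field K] [Algebra R K] (p : R[X]) {x : K}
    (hx : x ≠ 0) : aeval x p.reverse = x ^ p.natDegree * aeval x⁻¹ p := by
  have : Invertible x⁻¹ := invertibleOfNonzero (inv_ne_zero hx)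
  have h := eval₂_reverse_mul_pow (algebraMap R K) x⁻¹ p
  rw [invOf_eq_inv, inv_inv] at h
  rw [aeval_def, aeval_def, ← h, inv_pow, mul_left_comm, mul_inv_cancel₀ (pow_ne_zero _ hx),
    mul_one]

theorem reverse_eq_self_of_natDegree_eq_two {R : Type*} [Semiring R] {p : R[X]}
    (hp : p.natDegree = 2) (h : p.coeff 0 = p.coeff 2) : p.reverse = p := by
  ext n
  rw [coeff_reverse, hp]
  match n with
  | 0 => rw [revAt_le (by norm_num), ← h]
  | 1 => rw [revAt_le (by norm_num)]
  | 2 => rw [revAt_le (by norm_num), h]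
  | n + 3 => rw [revAt_eq_self_of_lt (by omega)]

theorem aeval_coe_real {R : Type*} [CommSemiring R] [Algebra R ℝ] (p : R[X]) (x : ℝ) :
    aeval (x : ℂ) p = aeval x p := by
  simpa using aeval_algebraMap_apply ℂ x p

theorem Monic.one_le_norm_prod_roots {p : ℤ[X]} (hp : p.Monic) (h0 : p.coeff 0 ≠ 0) :
    1 ≤ ‖(p.map (algebraMap ℤ ℂ)).roots.prod‖ := by
  have h := (IsAlgClosed.splits (p.map (algebraMap ℤ ℂ))).coeff_zero_eq_prod_roots_of_monic
    (hp.map _)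
  have hnorm := congrArg norm h
  rw [norm_mul, norm_pow, norm_neg, norm_one, one_pow, one_mul, coeff_map, eq_intCast,
    Complex.norm_intCast] at hnorm
  rw [← hnorm]
  exact_mod_cast Int.one_le_abs h0

theorem Monic.eq_X_pow_of_norm_lt_one {p : ℤ[X]} (hp : p.Monic)
    (h : ∀ z : ℂ, aeval z p = 0 → ‖z‖ < 1) : ∃ v, p = X ^ v := by
  obtain ⟨q, hpq, hXq⟩ := p.exists_eq_pow_rootMultiplicity_mul_and_not_dvd hp.ne_zero 0
  rw [C_0, sub_zero] at hpq hXq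
  have hq : q.Monic := (monic_X.pow _).of_mul_monic_left (hpq ▸ hp)
  suffices hroots : (q.map (algebraMap ℤ ℂ)).roots = 0 by
    have hdeg : q.natDegree = 0 := by
      rw [← hq.natDegree_map (algebraMap ℤ ℂ), ← IsAlgClosed.card_roots_eq_natDegree, hroots,
        Multiset.card_zero]
    exact ⟨_, by rw [hpq, hq.natDegree_eq_zero.1 hdeg, mul_one]⟩
  by_contra hne
  refine (hq.one_le_norm_prod_roots (by rwa [X_dvd_iff] at hXq)).not_gt
    (norm_multiset_prod_lt_one hne fun z hz => h z ?_)
  rw [mem_roots_map_of_injective (RingHom.injective_int _) hq.ne_zero, ← aeval_def] at hz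
  rw [hpq, map_mul, hz, mul_zero]

theorem Monic.le_of_aeval_nonpos {p : ℤ[X]} (hp : p.Monic) {a c : ℝ}
    (hroot : ∀ x, c ≤ x → aeval x p = 0 → x = a) (hc : aeval c p ≤ 0) : c ≤ a := by
  by_contra! h
  refine hc.not_gt (hp.aeval_pos fun x hx h0 => ?_)
  rw [hroot x hx h0] at hx
  exact hx.not_gt h

theorem separable_map_minpoly {L : Type*} [Field L] [CharZero L] {θ : L} (h : IsIntegral ℤ θ)
    (K : Type*) [Field K] [CharZero K] : ((minpoly ℤ θ).map (algebraMap ℤ K)).Separable := by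
  have hq : minpoly ℚ θ = (minpoly ℤ θ).map (algebraMap ℤ ℚ) :=
    minpoly.isIntegrallyClosed_eq_field_fractions' ℚ h
  have := (minpoly.irreducible h.tower_top).separable.map (f := algebraMap ℚ K)
  rwa [hq, map_map, ← IsScalarTower.algebraMap_eq] at this

end Polynomial

/-- The polynomial `Q_n^±(t) = t^n P(t) ± P_*(t)`, with `ε = ±1`; `P.reverse` is `P_*`. -/
noncomputable def salemPoly (P : ℤ[X]) (ε : ℤ) (n : ℕ) : ℤ[X] := X ^ n * P + C ε * P.reverse

theorem aeval_salemPoly {A : Type*} [CommRing A] (P : ℤ[X]) (ε : ℤ) (n : ℕ) (x : A) :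
    aeval x (salemPoly P ε n) = x ^ n * aeval x P + ε * aeval x P.reverse := by
  simp [salemPoly]

theorem Polynomial.Monic.salemPoly {P : ℤ[X]} (hP : P.Monic) (ε : ℤ) {n : ℕ} (hn : 1 ≤ n) :
    (salemPoly P ε n).Monic := by
  refine ((monic_X_pow n).mul hP).add_of_left (degree_lt_degree ?_)
  rw [(monic_X_pow n).natDegree_mul hP, natDegree_X_pow]
  exact (natDegree_C_mul_le _ _).trans_lt ((reverse_natDegree_le P).trans_lt (by omega))

theorem aeval_salemPoly_succ {A : Type*} [CommRing A] {P : ℤ[X]} {ε : ℤ} {n : ℕ} {x : A}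
    (h : aeval x (salemPoly P ε n) = 0) :
    aeval x (salemPoly P ε (n + 1)) = x ^ n * (x - 1) * aeval x P := by
  rw [aeval_salemPoly] at h ⊢
  linear_combination h

theorem mem_Ioo_of_aeval_salemPoly {P : ℤ[X]} {ε : ℤ} {n : ℕ} {α a b : ℝ}
    (hα : ∀ x : ℝ, 1 < x → aeval x (salemPoly P ε n) = 0 → x = α) (ha : 1 < a) (hab : a ≤ b)
    (hQa : aeval a (salemPoly P ε n) < 0) (hQb : 0 < aeval b (salemPoly P ε n)) : α ∈ Ioo a b :=
  mem_Ioo_of_unique_solution hab (Polynomial.continuous_aeval _).continuousOn hQa hQb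
    fun x hx => hα x (ha.trans hx.1)

structure IsPVPolynomial (P : ℤ[X]) (θ : ℝ) : Prop where
  monic : P.Monic
  one_lt : 1 < θ
  aeval_ofReal_eq_zero : aeval (θ : ℂ) P = 0
  norm_lt_one : ∀ z : ℂ, aeval z P = 0 → z ≠ θ → ‖z‖ < 1

namespace IsPVPolynomial

variable {P : ℤ[X]} {θ : ℝ}

theorem aeval_eq_zero (hP : IsPVPolynomial P θ) : aeval θ P = 0 := by
  have h := hP.aeval_ofReal_eq_zero
  rw [aeval_coe_real] at h
  exact_mod_cast h

theorem isIntegral (hP : IsPVPolynomial P θ) : IsIntegral ℤ θ :=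
  ⟨P, hP.monic, by rw [← aeval_def]; exact hP.aeval_eq_zero⟩

theorem aeval_ne_zero (hP : IsPVPolynomial P θ) {x : ℝ} (hx : 1 < x) (hxθ : x ≠ θ) :
    aeval x P ≠ 0 := by
  intro h
  have := hP.norm_lt_one x (by rw [aeval_coe_real, h, Complex.ofReal_zero])
    (by exact_mod_cast hxθ)
  rw [Complex.norm_real, Real.norm_of_nonneg (by linarith)] at this
  linarith

theorem aeval_pos (hP : IsPVPolynomial P θ) {x : ℝ} (hx : θ < x) : 0 < aeval x P :=
  hP.monic.aeval_pos fun _ hy =>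
    hP.aeval_ne_zero (by linarith [hP.one_lt]) (hx.trans_le hy).ne'

theorem minpoly_dvd (hP : IsPVPolynomial P θ) : minpoly ℤ θ ∣ P :=
  minpoly.isIntegrallyClosed_dvd hP.isIntegral hP.aeval_eq_zero

protected theorem minpoly (hP : IsPVPolynomial P θ) : IsPVPolynomial (minpoly ℤ θ) θ where
  monic := minpoly.monic hP.isIntegral
  one_lt := hP.one_lt
  aeval_ofReal_eq_zero := by rw [aeval_coe_real, minpoly.aeval, Complex.ofReal_zero]
  norm_lt_one z hz hzθ := by
    obtain ⟨q, hq⟩ := hP.minpoly_dvd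
    exact hP.norm_lt_one z (by rw [hq, map_mul, hz, zero_mul]) hzθ

theorem eq_X_pow_mul_minpoly_pow (hP : IsPVPolynomial P θ) :
    ∃ v k, P = X ^ v * minpoly ℤ θ ^ k := by
  have hint := hP.isIntegral
  obtain ⟨B, hPB, hB⟩ := (FiniteMultiplicity.of_not_isUnit (minpoly.irreducible hint).not_isUnit
    hP.monic.ne_zero).exists_eq_pow_mul_and_not_dvd
  have hBm : B.Monic := ((minpoly.monic hint).pow _).of_mul_monic_left (hPB ▸ hP.monic)
  obtain ⟨v, rfl⟩ := hBm.eq_X_pow_of_norm_lt_one fun z hz => by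
    refine hP.norm_lt_one z (by rw [hPB, map_mul, hz, mul_zero]) ?_
    rintro rfl
    rw [aeval_coe_real] at hz
    exact hB (minpoly.isIntegrallyClosed_dvd hint (by exact_mod_cast hz))
  exact ⟨v, _, by rw [hPB, mul_comm]⟩

theorem minpoly_coeff_zero_ne_zero (hP : IsPVPolynomial P θ) : (minpoly ℤ θ).coeff 0 ≠ 0 := by
  have h := minpoly.coeff_zero_ne_zero (hP.isIntegral.tower_top (A := ℚ))
    (by linarith [hP.one_lt] : θ ≠ 0)
  rw [minpoly.isIntegrallyClosed_eq_field_fractions' ℚ hP.isIntegral, coeff_map] at h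
  exact fun h0 => h (by rw [h0, map_zero])

theorem minpoly_roots_eq_pair (hP : IsPVPolynomial P θ) {r : ℝ} (hr : 0 < r) (hrθ : r * θ ≤ 1)
    (hmr : aeval r (minpoly ℤ θ) = 0) :
    ((minpoly ℤ θ).map (algebraMap ℤ ℂ)).roots = {(θ : ℂ), (r : ℂ)} ∧ r * θ = 1 := by
  have hm := hP.minpoly
  set roots := ((minpoly ℤ θ).map (algebraMap ℤ ℂ)).roots
  have hmem : ∀ z : ℂ, z ∈ roots ↔ aeval z (minpoly ℤ θ) = 0 := fun z => by
    rw [mem_roots_map_of_injective (RingHom.injective_int _) hm.monic.ne_zero, aeval_def]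
  have hrθ_ne : (r : ℂ) ≠ θ := by exact_mod_cast (show r < θ by nlinarith [hP.one_lt]).ne
  have hθ : (θ : ℂ) ∈ roots := (hmem θ).2 hm.aeval_ofReal_eq_zero
  have hr' : (r : ℂ) ∈ roots.erase θ :=
    (Multiset.mem_erase_of_ne hrθ_ne).2 ((hmem r).2 (by rw [aeval_coe_real, hmr, Complex.ofReal_zero]))
  set R := (roots.erase θ).erase r
  have hroots : roots = (θ : ℂ) ::ₘ (r : ℂ) ::ₘ R := by
    rw [Multiset.cons_erase hr', Multiset.cons_erase hθ]
  have hR : ∀ z ∈ R, ‖z‖ < 1 := fun z hz => by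
    have hz' := Multiset.mem_of_mem_erase hz
    refine hm.norm_lt_one z ((hmem z).1 (Multiset.mem_of_mem_erase hz')) ?_
    rintro rfl
    exact (nodup_roots (separable_map_minpoly hP.isIntegral ℂ)).notMem_erase hz'
  have hprod : 1 ≤ ‖roots.prod‖ := hm.monic.one_le_norm_prod_roots hP.minpoly_coeff_zero_ne_zero
  rw [hroots, Multiset.prod_cons, Multiset.prod_cons, norm_mul, norm_mul,
    Complex.norm_real, Complex.norm_real, Real.norm_of_nonneg (by linarith [hP.one_lt]),
    Real.norm_of_nonneg hr.le] at hprod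
  have hR0 : R = 0 := by
    by_contra hne
    nlinarith [norm_multiset_prod_lt_one hne hR, norm_nonneg R.prod]
  rw [hR0, Multiset.prod_zero, norm_one] at hprod
  exact ⟨by rw [hroots, hR0]; rfl, by linarith⟩

theorem minpoly_aeval_ne_zero (hP : IsPVPolynomial P θ)
    (hrec : (minpoly ℤ θ).reverse ≠ minpoly ℤ θ) {r : ℝ} (hr : 0 < r) (hrθ : r * θ ≤ 1) :
    aeval r (minpoly ℤ θ) ≠ 0 := by
  intro hmr
  obtain ⟨hroots, hrθ1⟩ := hP.minpoly_roots_eq_pair hr hrθ hmr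
  have hmon := hP.minpoly.monic
  have hdeg : (minpoly ℤ θ).natDegree = 2 := by
    rw [← hmon.natDegree_map (algebraMap ℤ ℂ), ← IsAlgClosed.card_roots_eq_natDegree, hroots]
    rfl
  have hc0 : (minpoly ℤ θ).coeff 0 = 1 := by
    have h := (IsAlgClosed.splits _).coeff_zero_eq_prod_roots_of_monic (hmon.map (algebraMap ℤ ℂ))
    rw [hroots, coeff_map, hmon.natDegree_map, hdeg, eq_intCast] at h
    have h' : ((minpoly ℤ θ).coeff 0 : ℂ) = ((r * θ : ℝ) : ℂ) := by
      rw [h]; simp [mul_comm]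
    rw [hrθ1, Complex.ofReal_one] at h'
    exact_mod_cast h'
  refine hrec (reverse_eq_self_of_natDegree_eq_two hdeg ?_)
  rw [hc0, ← hdeg, ← leadingCoeff, hmon.leadingCoeff]

theorem minpoly_reverse_ne (hP : IsPVPolynomial P θ)
    (hrecip : ¬∃ q : ℤ[X], q ∣ P ∧ 0 < q.natDegree ∧ q.reverse = q) :
    (minpoly ℤ θ).reverse ≠ minpoly ℤ θ :=
  fun h => hrecip ⟨_, hP.minpoly_dvd, minpoly.natDegree_pos hP.isIntegral, h⟩

theorem aeval_eq_pow_mul_pow (hP : IsPVPolynomial P θ) :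
    ∃ v k, ∀ x : ℝ, aeval x P = x ^ v * aeval x (minpoly ℤ θ) ^ k := by
  obtain ⟨v, k, hPvk⟩ := hP.eq_X_pow_mul_minpoly_pow
  exact ⟨v, k, fun x => by rw [hPvk, map_mul, map_pow, map_pow, aeval_X]⟩

theorem aeval_ne_zero_of_mul_le_one (hP : IsPVPolynomial P θ)
    (hrec : (minpoly ℤ θ).reverse ≠ minpoly ℤ θ) {r : ℝ} (hr : 0 < r)
    (hrθ : r * θ ≤ 1) : aeval r P ≠ 0 := by
  obtain ⟨v, k, heval⟩ := hP.aeval_eq_pow_mul_pow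
  rw [heval]
  exact mul_ne_zero (pow_ne_zero _ hr.ne')
    (pow_ne_zero _ (hP.minpoly_aeval_ne_zero hrec hr hrθ))

theorem trailingCoeff_mul_aeval_reverse_pos (hP : IsPVPolynomial P θ)
    (hrec : (minpoly ℤ θ).reverse ≠ minpoly ℤ θ) {x : ℝ} (hx : θ ≤ x) :
    0 < (P.trailingCoeff : ℝ) * aeval x P.reverse := by
  rw [← reverse_leadingCoeff]
  refine leadingCoeff_mul_aeval_pos fun y hy => ?_
  have hy0 : 0 < y := by linarith [hP.one_lt]
  rw [aeval_reverse P hy0.ne']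
  refine mul_ne_zero (pow_ne_zero _ hy0.ne')
    (hP.aeval_ne_zero_of_mul_le_one hrec (inv_pos.2 hy0) ?_)
  rw [inv_mul_le_iff₀ hy0]
  linarith

theorem aeval_minpoly_neg (hP : IsPVPolynomial P θ) {x : ℝ} (hx : 1 < x) (hxθ : x < θ) :
    aeval x (minpoly ℤ θ) < 0 := by
  have hm := hP.minpoly
  have hmult : ((minpoly ℤ θ).map (algebraMap ℤ ℝ)).rootMultiplicity θ = 1 :=
    le_antisymm (rootMultiplicity_le_one_of_separable (separable_map_minpoly hP.isIntegral ℝ) θ)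
      ((rootMultiplicity_pos (hm.monic.map _).ne_zero).2
        (by rw [IsRoot, eval_map_algebraMap]; exact hm.aeval_eq_zero))
  have h := (hm.monic.map (algebraMap ℤ ℝ)).neg_one_pow_rootMultiplicity_mul_eval_pos hxθ
    fun y hy hyθ => by rw [eval_map_algebraMap]; exact hm.aeval_ne_zero (hx.trans_le hy) hyθ
  rw [hmult, pow_one, eval_map_algebraMap] at h
  linarith

theorem aeval_neg_or_nonneg (hP : IsPVPolynomial P θ) :
    (∀ x, 1 < x → x < θ → aeval x P < 0) ∨ ∀ x : ℝ, 0 ≤ x → 0 ≤ aeval x P := by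
  obtain ⟨v, k, heval⟩ := hP.aeval_eq_pow_mul_pow
  rcases Nat.even_or_odd k with hk | hk
  · exact Or.inr fun x hx => by
      rw [heval]; exact mul_nonneg (pow_nonneg hx _) (hk.pow_nonneg _)
  · exact Or.inl fun x hx hxθ => by
      rw [heval]
      exact mul_neg_of_pos_of_neg (pow_pos (by linarith) _)
        (hk.pow_neg (hP.aeval_minpoly_neg hx hxθ))

theorem aeval_salemPoly_pos (hP : IsPVPolynomial P θ)
    (hrec : (minpoly ℤ θ).reverse ≠ minpoly ℤ θ) {ε : ℤ}
    (hε : 0 < ε * P.trailingCoeff) (n : ℕ) {x : ℝ} (hx : θ ≤ x) :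
    0 < aeval x (salemPoly P ε n) := by
  have hrev := hP.trailingCoeff_mul_aeval_reverse_pos hrec hx
  have hε' : 0 < (ε : ℝ) * P.trailingCoeff := by exact_mod_cast hε
  have hPx : 0 ≤ aeval x P := hx.eq_or_lt.elim (fun h => h ▸ hP.aeval_eq_zero.ge)
    (fun h => (hP.aeval_pos h).le)
  have hxn : 0 < x ^ n := pow_pos (by linarith [hP.one_lt]) n
  have hεrev : 0 < (ε : ℝ) * aeval x P.reverse := by
    nlinarith [mul_pos hε' hrev, mul_self_nonneg (P.trailingCoeff : ℝ)]
  rw [aeval_salemPoly]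
  positivity

theorem aeval_salemPoly_neg (hP : IsPVPolynomial P θ)
    (hrec : (minpoly ℤ θ).reverse ≠ minpoly ℤ θ) {ε : ℤ}
    (hε : ε * P.trailingCoeff < 0) (n : ℕ) : aeval θ (salemPoly P ε n) < 0 := by
  have hrev := hP.trailingCoeff_mul_aeval_reverse_pos hrec le_rfl
  have hε' : (ε : ℝ) * P.trailingCoeff < 0 := by exact_mod_cast hε
  rw [aeval_salemPoly, hP.aeval_eq_zero, mul_zero, zero_add]
  nlinarith [mul_neg_of_neg_of_pos hε' hrev, mul_self_nonneg (P.trailingCoeff : ℝ)]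

theorem aeval_neg_of_aeval_salemPoly_eq_zero (hP : IsPVPolynomial P θ)
    (hrec : (minpoly ℤ θ).reverse ≠ minpoly ℤ θ) {ε : ℤ}
    (hε : 0 < ε * P.trailingCoeff) {n : ℕ} {x : ℝ} (hx : 1 < x) (hxθ : x < θ)
    (hQ : aeval x (salemPoly P ε n) = 0) : aeval x P < 0 := by
  refine hP.aeval_neg_or_nonneg.elim (fun h => h x hx hxθ) fun hnonneg => ?_
  have hrev : ∀ y : ℝ, 0 < y → 0 ≤ aeval y P.reverse := fun y hy => by
    rw [aeval_reverse P hy.ne']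
    exact mul_nonneg (pow_nonneg hy.le _) (hnonneg _ (inv_nonneg.2 hy.le))
  have hℓ : 0 < P.trailingCoeff := by
    have h := hP.trailingCoeff_mul_aeval_reverse_pos hrec le_rfl
    have h' := hrev θ (by linarith [hP.one_lt])
    exact_mod_cast (pos_and_pos_or_neg_and_neg_of_mul_pos h).resolve_right
      (fun hneg => hneg.2.not_ge h') |>.1
  have hε' : (0 : ℝ) < ε := by exact_mod_cast (pos_iff_pos_of_mul_pos hε).2 hℓ
  have hPx : 0 < aeval x P :=
    (hnonneg x (by linarith)).lt_of_ne' (hP.aeval_ne_zero hx hxθ.ne)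
  rw [aeval_salemPoly] at hQ
  nlinarith [pow_pos (by linarith : (0 : ℝ) < x) n, mul_nonneg hε'.le (hrev x (by linarith))]

end IsPVPolynomial

theorem stmt_12_general (P : Polynomial ℤ) (hP : P.Monic)
    (θ : ℝ) (hθ : 1 < θ) (hroot : (Polynomial.aeval (θ : ℂ)) P = 0)
    (hin : ∀ z : ℂ, (Polynomial.aeval z) P = 0 → z ≠ (θ : ℂ) → ‖z‖ < 1)
    (hrecip : ¬ ∃ q : Polynomial ℤ, q ∣ P ∧ 0 < q.natDegree ∧ q.reverse = q)
    (ε : ℤ)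
    (α : ℕ → ℝ)
    (hα : ∀ n : ℕ, 1 ≤ n → 1 < α n ∧
        (Polynomial.aeval (α n)) (X ^ n * P + C ε * P.reverse) = 0 ∧
        ∀ x : ℝ, 1 < x →
          (Polynomial.aeval x) (X ^ n * P + C ε * P.reverse) = 0 → x = α n) :
    (0 < ε * P.trailingCoeff →
        ∀ n : ℕ, 1 ≤ n → α n < α (n + 1) ∧ α n < θ) ∧
      (ε * P.trailingCoeff < 0 →
        ∀ n : ℕ, 1 ≤ n → α (n + 1) < α n ∧ θ < α n) := by
  have hPV : IsPVPolynomial P θ := ⟨hP, hθ, hroot, hin⟩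
  have hrec := hPV.minpoly_reverse_ne hrecip
  have hα : ∀ n, 1 ≤ n → 1 < α n ∧ aeval (α n) (salemPoly P ε n) = 0 ∧
      ∀ x : ℝ, 1 < x → aeval x (salemPoly P ε n) = 0 → x = α n := hα
  refine ⟨fun hε n hn => ?_, fun hε n hn => ?_⟩
  · obtain ⟨h1, h0, -⟩ := hα n hn
    have hlt : α n < θ :=
      lt_of_not_ge fun h => (hPV.aeval_salemPoly_pos hrec hε n h).ne' h0
    have hneg : aeval (α n) (salemPoly P ε (n + 1)) < 0 := by
      rw [aeval_salemPoly_succ h0]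
      exact mul_neg_of_pos_of_neg (mul_pos (pow_pos (by linarith) n) (sub_pos.2 h1))
        (hPV.aeval_neg_of_aeval_salemPoly_eq_zero hrec hε h1 hlt h0)
    exact ⟨(mem_Ioo_of_aeval_salemPoly (hα (n + 1) (by omega)).2.2 h1 hlt.le hneg
      (hPV.aeval_salemPoly_pos hrec hε _ le_rfl)).1, hlt⟩
  · obtain ⟨h1, h0, huniq⟩ := hα n hn
    have hθn := hPV.aeval_salemPoly_neg hrec hε n
    have hgt : θ < α n := by
      refine lt_of_le_of_ne ((hP.salemPoly ε hn).le_of_aeval_nonpos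
        (fun x hx => huniq x (hθ.trans_le hx)) hθn.le) ?_
      rintro rfl
      exact hθn.ne h0
    have hpos : 0 < aeval (α n) (salemPoly P ε (n + 1)) := by
      rw [aeval_salemPoly_succ h0]
      exact mul_pos (mul_pos (pow_pos (by linarith) n) (sub_pos.2 h1)) (hPV.aeval_pos hgt)
    exact ⟨(mem_Ioo_of_aeval_salemPoly (hα (n + 1) (by omega)).2.2 hθ hgt.le
      (hPV.aeval_salemPoly_neg hrec hε _) hpos).2, hgt⟩

/-- Salem's monotonicity: if `P` is a P-V polynomial for the P-V number `θ`
(no reciprocal factors, `P(1) ≠ 0`), and `α n > 1` is the real root of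
`Q_n^±(t) = t^n P(t) ± P_*(t)` outside the unit circle, then: if `±ℓ(P) > 0`
the sequence `(α n)` is monotone increasing with `α n < θ`, and if
`±ℓ(P) < 0` it is monotone decreasing with `α n > θ`. -/
theorem stmt_12 (P : Polynomial ℤ) (hP : P.Monic)
    (θ : ℝ) (hθ : 1 < θ) (hroot : (Polynomial.aeval (θ : ℂ)) P = 0)
    (hin : ∀ z : ℂ, (Polynomial.aeval z) P = 0 → z ≠ (θ : ℂ) → ‖z‖ < 1)
    (hrecip : ¬ ∃ q : Polynomial ℤ, q ∣ P ∧ 0 < q.natDegree ∧ q.reverse = q)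
    (hone : P.eval 1 ≠ 0)
    (ε : ℤ) (hε : ε = 1 ∨ ε = -1)
    (α : ℕ → ℝ)
    (hα : ∀ n : ℕ, 1 ≤ n → 1 < α n ∧
        (Polynomial.aeval (α n)) (X ^ n * P + C ε * P.reverse) = 0 ∧
        ∀ x : ℝ, 1 < x →
          (Polynomial.aeval x) (X ^ n * P + C ε * P.reverse) = 0 → x = α n) :
    (0 < ε * P.trailingCoeff →
        ∀ n : ℕ, 1 ≤ n → α n < α (n + 1) ∧ α n < θ) ∧
      (ε * P.trailingCoeff < 0 →
        ∀ n : ℕ, 1 ≤ n → α (n + 1) < α n ∧ θ < α n) :=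
  stmt_12_general P hP θ hθ hroot hin hrecip ε α hα
end

section
/- Let P be a monic integer polynomial with simple roots α_1, ..., α_s outside the unit circle, and let α_i^{(n)} denote the roots of Q_n(t) = t^n P(t) ± P_*(t) outside the unit circle labeled so that α_i^{(n)} → α_i. Then α_i^{(n)} - α_i = (α_i^{(n)})^{-n} R_n where R_n converges to a nonzero constant R; consequently Arg(α_i^{(n)} - α_i) = Arg(R) - n·Arg(α_i) + δ_n with δ_n → 0. -/
/-!
Write `P = (t - α) Q` over `ℂ`, so that `Q(α) = P'(α) ≠ 0` for a simple root `α`. A root `z` of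
`t ^ n P + ε P_*` satisfies `z ^ n (z - α) = -ε P_*(z) / Q(z)`, which tends to
`R = -ε P_*(α) / P'(α) ≠ 0` as `z → α`. Hence `z - α` is geometrically small, so
`n (α / z - 1) → 0` and `(α / z) ^ n → 1`: also `(z - α) α ^ n → R`. Taking arguments modulo `1`
gives the formula, since `arg` is continuous at `1` and `(z - α) α ^ n / R → 1`.
-/

open Polynomial Filter

/-- Argument of a complex number normalized so that `z = |z| e^{2πi Arg z}`. -/
noncomputable def nArg (z : ℂ) : ℝ := Complex.arg z / (2 * Real.pi)

open Topology

namespace Polynomial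

variable {K : Type*} [Field K]

theorem exists_eq_X_sub_C_mul_eval_eq_eval_derivative {p : K[X]} {a : K}
    (hp : p.rootMultiplicity a = 1) :
    ∃ q : K[X], p = (X - C a) * q ∧ q.eval a = p.derivative.eval a ∧ q.eval a ≠ 0 := by
  have hp0 : p ≠ 0 := by rintro rfl; simp at hp
  obtain ⟨q, hpq, hq⟩ := p.exists_eq_pow_rootMultiplicity_mul_and_not_dvd hp0 a
  rw [hp, pow_one] at hpq
  refine ⟨q, hpq, by simp [hpq, derivative_mul], fun h => hq (dvd_iff_isRoot.mpr h)⟩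

theorem eval_derivative_ne_zero_of_rootMultiplicity_eq_one {p : K[X]} {a : K}
    (hp : p.rootMultiplicity a = 1) : p.derivative.eval a ≠ 0 := by
  obtain ⟨q, -, hqa, hq⟩ := exists_eq_X_sub_C_mul_eval_eq_eval_derivative hp
  rwa [← hqa]

theorem tendsto_pow_mul_sub_of_pow_mul_eval_add_eval_eq_zero [TopologicalSpace K]
    [IsTopologicalDivisionRing K] [T1Space K] {p r : K[X]} {a : K} (hp : p.rootMultiplicity a = 1)
    {z : ℕ → K} (hz : Tendsto z atTop (𝓝 a))
    (hroot : ∀ᶠ n in atTop, z n ^ n * p.eval (z n) + r.eval (z n) = 0) :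
    Tendsto (fun n => z n ^ n * (z n - a)) atTop (𝓝 (-r.eval a / p.derivative.eval a)) := by
  obtain ⟨q, hpq, hqa, hq⟩ := exists_eq_X_sub_C_mul_eval_eq_eval_derivative hp
  have hqz : Tendsto (fun n => q.eval (z n)) atTop (𝓝 (q.eval a)) :=
    (q.continuous.tendsto a).comp hz
  have hrz : Tendsto (fun n => r.eval (z n)) atTop (𝓝 (r.eval a)) :=
    (r.continuous.tendsto a).comp hz
  rw [← hqa]
  refine (hrz.neg.div hqz hq).congr' ?_
  filter_upwards [hqz.eventually_ne hq, hroot] with n hqn hn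
  rw [hpq, eval_mul, eval_sub, eval_X, eval_C] at hn
  rw [Pi.div_apply, div_eq_iff hqn]
  linear_combination -hn

end Polynomial

theorem tendsto_natCast_div_pow_of_tendsto {z : ℕ → ℂ} {a : ℂ} (hz : Tendsto z atTop (𝓝 a))
    (ha : 1 < ‖a‖) : Tendsto (fun n : ℕ => (n : ℂ) / z n ^ n) atTop (𝓝 0) := by
  obtain ⟨r, hr1, hra⟩ := exists_between ha
  have hrz : ∀ᶠ n in atTop, r ≤ ‖z n‖ :=
    ((continuous_norm.tendsto a).comp hz).eventually (lt_mem_nhds hra) |>.mono fun _ h => h.le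
  rw [tendsto_zero_iff_norm_tendsto_zero]
  refine squeeze_zero' (.of_forall fun n => norm_nonneg _) ?_
    (by simpa using tendsto_pow_const_div_const_pow_of_one_lt 1 hr1)
  filter_upwards [hrz] with n hn
  rw [norm_div, norm_pow, Complex.norm_natCast]
  gcongr

/-- Since `z n - a = O(‖z n‖ ^ (-n))` decays geometrically, `n * (a / z n - 1) → 0`, hence
`(a / z n) ^ n → 1`. -/
theorem tendsto_sub_mul_pow_of_tendsto_pow_mul_sub {z : ℕ → ℂ} {a R : ℂ}
    (hz : Tendsto z atTop (𝓝 a)) (ha : 1 < ‖a‖)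
    (hR : Tendsto (fun n => z n ^ n * (z n - a)) atTop (𝓝 R)) :
    Tendsto (fun n => (z n - a) * a ^ n) atTop (𝓝 R) := by
  have ha0 : a ≠ 0 := norm_pos_iff.mp (one_pos.trans ha)
  have hz0 : ∀ᶠ n in atTop, z n ≠ 0 := hz.eventually_ne ha0
  have hsmall : Tendsto (fun n : ℕ => (n : ℂ) * ((a - z n) / z n)) atTop (𝓝 0) := by
    have := (((tendsto_natCast_div_pow_of_tendsto hz ha).mul hR).div hz ha0).neg
    rw [zero_mul, zero_div, neg_zero] at this
    refine this.congr' ?_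
    filter_upwards [hz0] with n hn
    simp only [Pi.div_apply]
    field_simp
    ring
  have hpow := Complex.tendsto_one_add_pow_exp_of_tendsto hsmall
  rw [Complex.exp_zero] at hpow
  refine (mul_one R ▸ hR.mul hpow).congr' ?_
  filter_upwards [hz0] with n hn
  rw [one_add_div hn, add_sub_cancel, div_pow]
  field_simp

theorem exists_nArg_mul_eq_add {z w : ℂ} (hz : z ≠ 0) (hw : w ≠ 0) :
    ∃ k : ℤ, nArg (z * w) = nArg z + nArg w + k := by
  obtain ⟨k, hk⟩ := (Real.Angle.angle_eq_iff_two_pi_dvd_sub).mp <|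
    (Real.Angle.coe_add _ _).symm ▸ Complex.arg_mul_coe_angle hz hw
  refine ⟨k, ?_⟩
  unfold nArg
  field_simp
  linear_combination hk

theorem exists_nArg_pow_eq_mul {z : ℂ} (hz : z ≠ 0) (n : ℕ) :
    ∃ k : ℤ, nArg (z ^ n) = n * nArg z + k := by
  induction n with
  | zero => exact ⟨0, by simp [nArg]⟩
  | succ m ih =>
    obtain ⟨k, hk⟩ := ih
    obtain ⟨k', hk'⟩ := exists_nArg_mul_eq_add (pow_ne_zero m hz) hz
    refine ⟨k + k', ?_⟩
    rw [pow_succ, hk', hk]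
    push_cast
    ring

theorem eventually_exists_nArg_eq_add_of_tendsto {ι : Type*} {l : Filter ι} {u : ι → ℂ} {L : ℂ}
    (hL : L ≠ 0) (hu : Tendsto u l (𝓝 L)) {δ : ℝ} (hδ : 0 < δ) :
    ∀ᶠ n in l, ∃ (d : ℝ) (k : ℤ), |d| < δ ∧ nArg (u n) = nArg L + d + k := by
  have hratio : Tendsto (fun n => nArg (u n / L)) l (𝓝 0) := by
    have h := ((Complex.continuousAt_arg (by simp)).tendsto.comp
      (div_self hL ▸ hu.div_const L)).div_const (2 * Real.pi)
    rwa [Complex.arg_one, zero_div] at h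
  filter_upwards [hu.eventually_ne hL, hratio.eventually (Metric.ball_mem_nhds 0 hδ)]
    with n hn hsmall
  obtain ⟨k, hk⟩ := exists_nArg_mul_eq_add hL (div_ne_zero hn hL)
  rw [mul_div_cancel₀ _ hL] at hk
  exact ⟨nArg (u n / L), k, by simpa [Real.dist_eq] using hsmall, hk⟩

theorem eventually_exists_nArg_eq_of_tendsto_mul_pow {u : ℕ → ℂ} {a R : ℂ} (ha : a ≠ 0)
    (hR : R ≠ 0) (hu : Tendsto (fun n => u n * a ^ n) atTop (𝓝 R)) {δ : ℝ} (hδ : 0 < δ) :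
    ∀ᶠ n in atTop, ∃ (d : ℝ) (k : ℤ), |d| < δ ∧ nArg (u n) = nArg R - n * nArg a + d + k := by
  filter_upwards [eventually_exists_nArg_eq_add_of_tendsto hR hu hδ, hu.eventually_ne hR]
    with n ⟨d, k, hd, hk⟩ hn
  obtain ⟨k₁, hk₁⟩ := exists_nArg_mul_eq_add (left_ne_zero_of_mul hn) (pow_ne_zero n ha)
  obtain ⟨k₂, hk₂⟩ := exists_nArg_pow_eq_mul ha n
  refine ⟨d, k - k₁ - k₂, hd, ?_⟩
  push_cast
  linarith

theorem stmt_15_general (P : Polynomial ℤ)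
    (s : ℕ) (α : Fin s → ℂ)
    (hroots : ∀ i, (Polynomial.aeval (α i)) P = 0 ∧ 1 < ‖α i‖ ∧
      (P.map (Int.castRingHom ℂ)).rootMultiplicity (α i) = 1)
    (hPstar : ∀ i, (Polynomial.aeval (α i)) P.reverse ≠ 0)
    (ε : ℤ) (hε : ε = 1 ∨ ε = -1)
    (αn : ℕ → Fin s → ℂ) (N₀ : ℕ)
    (hαn : ∀ n : ℕ, N₀ ≤ n → ∀ i,
      (Polynomial.aeval (αn n i)) (X ^ n * P + C ε * P.reverse) = 0 ∧
        1 < ‖αn n i‖)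
    (hlim : ∀ i, Tendsto (fun n => αn n i) atTop (nhds (α i))) :
    ∀ i, ∃ R : ℂ, R ≠ 0 ∧
      Tendsto (fun n => (αn n i) ^ n * (αn n i - α i)) atTop (nhds R) ∧
      ∀ δ : ℝ, 0 < δ → ∃ N : ℕ, ∀ n : ℕ, N < n → ∃ (d : ℝ) (k : ℤ), |d| < δ ∧
        nArg (αn n i - α i) = nArg R - n * nArg (α i) + d + k := by
  intro i
  obtain ⟨-, hαi, hsimple⟩ := hroots i
  set p := P.map (Int.castRingHom ℂ)
  set q := C (ε : ℂ) * P.reverse.map (Int.castRingHom ℂ)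
  have haeval (f : ℤ[X]) (z : ℂ) : aeval z f = (f.map (Int.castRingHom ℂ)).eval z := by
    rw [aeval_def, eval_map, algebraMap_int_eq]
  have hroot : ∀ᶠ n in atTop, αn n i ^ n * p.eval (αn n i) + q.eval (αn n i) = 0 := by
    filter_upwards [eventually_ge_atTop N₀] with n hn
    simpa [p, q, haeval] using (hαn n hn i).1
  have hR := tendsto_pow_mul_sub_of_pow_mul_eval_add_eval_eq_zero hsimple (hlim i) hroot
  have hR0 : -q.eval (α i) / p.derivative.eval (α i) ≠ 0 := by
    refine div_ne_zero (neg_ne_zero.mpr ?_)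
      (eval_derivative_ne_zero_of_rootMultiplicity_eq_one hsimple)
    rw [eval_mul, eval_C, ← haeval]
    exact mul_ne_zero (by rcases hε with rfl | rfl <;> norm_num) (hPstar i)
  refine ⟨_, hR0, hR, fun δ hδ => ?_⟩
  have hα0 : α i ≠ 0 := norm_pos_iff.mp (one_pos.trans hαi)
  obtain ⟨N, hN⟩ := eventually_atTop.mp <| eventually_exists_nArg_eq_of_tendsto_mul_pow hα0 hR0
    (tendsto_sub_mul_pow_of_tendsto_pow_mul_sub (hlim i) hαi hR) hδ
  exact ⟨N, fun n hn => hN n hn.le⟩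

/-- If `P` is monic with simple roots `α_1, …, α_s` outside the unit circle and
`α_i^{(n)}` are the roots of `Q_n = t^n P(t) ± P_*(t)` outside the unit circle
with `α_i^{(n)} → α_i`, then `α_i^{(n)} - α_i = (α_i^{(n)})^{-n} R_n` with
`R_n → R ≠ 0`; consequently
`Arg(α_i^{(n)} - α_i) = Arg R - n Arg(α_i) + δ_n (mod 1)` with `δ_n → 0`. -/
theorem stmt_15 (P : Polynomial ℤ) (hP : P.Monic)
    (s : ℕ) (α : Fin s → ℂ) (hinj : Function.Injective α)
    (hroots : ∀ i, (Polynomial.aeval (α i)) P = 0 ∧ 1 < ‖α i‖ ∧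
      (P.map (Int.castRingHom ℂ)).rootMultiplicity (α i) = 1)
    (hall : ∀ z : ℂ, (Polynomial.aeval z) P = 0 → 1 < ‖z‖ → ∃ i, z = α i)
    (hPstar : ∀ i, (Polynomial.aeval (α i)) P.reverse ≠ 0)
    (ε : ℤ) (hε : ε = 1 ∨ ε = -1)
    (αn : ℕ → Fin s → ℂ) (N₀ : ℕ)
    (hαn : ∀ n : ℕ, N₀ ≤ n → ∀ i,
      (Polynomial.aeval (αn n i)) (X ^ n * P + C ε * P.reverse) = 0 ∧
        1 < ‖αn n i‖)
    (hlim : ∀ i, Tendsto (fun n => αn n i) atTop (nhds (α i))) :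
    ∀ i, ∃ R : ℂ, R ≠ 0 ∧
      Tendsto (fun n => (αn n i) ^ n * (αn n i - α i)) atTop (nhds R) ∧
      ∀ δ : ℝ, 0 < δ → ∃ N : ℕ, ∀ n : ℕ, N < n → ∃ (d : ℝ) (k : ℤ), |d| < δ ∧
        nArg (αn n i - α i) = nArg R - n * nArg (α i) + d + k :=
  stmt_15_general P s α hroots hPstar ε hε αn N₀ hαn hlim
end

section
/- Let S_1 be an invertible integer matrix of size d of block form [[S_0, x],[y^T, s]] with S_0 of size d-1, and let v = (0,...,0,1)^T ∈ ℤ^d. Then det(t S_1 - (S_1^T ∓ v v^T)) = det(t S_1 - S_1^T) ± det(t S_0 - S_0^T). -/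
open Polynomial Matrix

section

variable {m R : Type*} [Fintype m] [DecidableEq m] [CommRing R]

theorem det_updateCol_inr_elim_zero_one (A : Matrix (m ⊕ Fin 1) (m ⊕ Fin 1) R) :
    (A.updateCol (Sum.inr 0) (Sum.elim (fun _ => 0) (fun _ => 1))).det = A.toBlocks₁₁.det := by
  have hblocks : A.updateCol (Sum.inr 0) (Sum.elim (fun _ => 0) (fun _ => 1)) =
      fromBlocks A.toBlocks₁₁ 0 A.toBlocks₂₁ 1 := by
    ext (i | i) (j | j) <;>
      simp [toBlocks₁₁, toBlocks₂₁, one_apply, Fin.fin_one_eq_zero]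
  rw [hblocks, det_fromBlocks_zero₁₂, det_one, mul_one]

/-- Expansion along the last column: the rank-one perturbation only touches the corner entry,
whose cofactor is the determinant of the leading block. -/
theorem det_add_smul_vecMulVec_inr (A : Matrix (m ⊕ Fin 1) (m ⊕ Fin 1) R) (c : R) :
    (A + c • vecMulVec (Sum.elim (fun _ => 0) (fun _ => 1))
        (Sum.elim (fun _ => 0) (fun _ => 1))).det =
      A.det + c * A.toBlocks₁₁.det := by
  set e : m ⊕ Fin 1 → R := Sum.elim (fun _ => 0) (fun _ => 1)
  have hcol : A + c • vecMulVec e e = A.updateCol (Sum.inr 0) (Aᵀ (Sum.inr 0) + c • e) := by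
    ext i (j | j)
    · simp [e, vecMulVec_apply]
    · simp [e, vecMulVec_apply, Fin.fin_one_eq_zero]
  rw [hcol, det_updateCol_add, det_updateCol_smul, det_updateCol_inr_elim_zero_one,
    show A.updateCol (Sum.inr 0) (Aᵀ (Sum.inr 0)) = A from A.updateCol_eq_self _]

end

theorem stmt_17_general (d : ℕ) (S₀ : Matrix (Fin d) (Fin d) ℤ)
    (x y : Fin d → ℤ) (s : ℤ)
    (S₁ : Matrix (Fin d ⊕ Fin 1) (Fin d ⊕ Fin 1) ℤ)
    (hS₁ : S₁ = Matrix.fromBlocks S₀ (Matrix.of fun i (_ : Fin 1) => x i)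
      (Matrix.of fun (_ : Fin 1) j => y j) (Matrix.of fun _ _ => s))
    (v : (Fin d ⊕ Fin 1) → Polynomial ℤ) (hv : v = Sum.elim (fun _ => (0 : Polynomial ℤ)) (fun _ => (1 : Polynomial ℤ)))
    (ε : ℤ) :
    Matrix.det ((X : Polynomial ℤ) • S₁.map C -
        ((S₁.map C)ᵀ - C ε • Matrix.vecMulVec v v)) =
      Matrix.det ((X : Polynomial ℤ) • S₁.map C - (S₁.map C)ᵀ) +
        C ε * Matrix.det ((X : Polynomial ℤ) • S₀.map C - (S₀.map C)ᵀ) := by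
  have hblock : ((X : Polynomial ℤ) • S₁.map C - (S₁.map C)ᵀ).toBlocks₁₁ =
      (X : Polynomial ℤ) • S₀.map C - (S₀.map C)ᵀ := by
    subst hS₁
    ext i j
    simp [toBlocks₁₁]
  rw [← sub_add, hv, det_add_smul_vecMulVec_inr, hblock]

/-- For an invertible integer matrix `S₁ = [[S₀, x],[yᵀ, s]]` and
`v = (0,…,0,1)ᵀ`, one has
`det(t S₁ - (S₁ᵀ ∓ v vᵀ)) = det(t S₁ - S₁ᵀ) ± det(t S₀ - S₀ᵀ)`
as polynomials in `t`. -/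
theorem stmt_17 (d : ℕ) (S₀ : Matrix (Fin d) (Fin d) ℤ)
    (x y : Fin d → ℤ) (s : ℤ)
    (S₁ : Matrix (Fin d ⊕ Fin 1) (Fin d ⊕ Fin 1) ℤ)
    (hS₁ : S₁ = Matrix.fromBlocks S₀ (Matrix.of fun i (_ : Fin 1) => x i)
      (Matrix.of fun (_ : Fin 1) j => y j) (Matrix.of fun _ _ => s))
    (hinv : IsUnit S₁.det)
    (v : (Fin d ⊕ Fin 1) → Polynomial ℤ) (hv : v = Sum.elim (fun _ => (0 : Polynomial ℤ)) (fun _ => (1 : Polynomial ℤ)))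
    (ε : ℤ) (hε : ε = 1 ∨ ε = -1) :
    Matrix.det ((X : Polynomial ℤ) • S₁.map C -
        ((S₁.map C)ᵀ - C ε • Matrix.vecMulVec v v)) =
      Matrix.det ((X : Polynomial ℤ) • S₁.map C - (S₁.map C)ᵀ) +
        C ε * Matrix.det ((X : Polynomial ℤ) • S₀.map C - (S₀.map C)ᵀ) :=
  stmt_17_general d S₀ x y s S₁ hS₁ v hv ε
end
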